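/- arXiv:2204.05263 — 4 statements merged into one kernel-verified Lean document; each statement's English description precedes it below -/
import Mathlib

section
/- Degeneracy of the plus-branch solution (Proposition 3(ii)): define Q_{+,0} := G_c(N,0)^{1/2}S₀^{1/2}(S₀ + (1/2)I + (S₀^{1/2}S_NS₀^{1/2} + (1/4)I)^{1/2})⁻¹S₀^{1/2}G_c(N,0)^{1/2} and let Q_{+,k} satisfy Q_{+,k+1} = A_kQ_{+,k}A_kᵀ − B_kB_kᵀ for k = 0,…,N−1. If Q_{+,k} is invertible for every k ∈ {0,…,N}, then there exists s ∈ {0,…,N−1} such that I + B_sᵀQ_{+,s+1}⁻¹B_s is not positive definite. -/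
open Matrix

noncomputable section

/-- `prodAux A l d = A (l+d-1) * ⋯ * A l` (the empty product for `d = 0`). -/
def prodAux {n : ℕ} (A : ℕ → Matrix (Fin n) (Fin n) ℝ) (l : ℕ) :
    ℕ → Matrix (Fin n) (Fin n) ℝ
  | 0 => 1
  | d + 1 => A (l + d) * prodAux A l d

/-- State-transition matrix `Φ(k,l)`: `A_{k-1} ⋯ A_l` for `k > l`, `I` for `k = l`,
and `A_k⁻¹ ⋯ A_{l-1}⁻¹` for `k < l`. -/
def Phi {n : ℕ} (A : ℕ → Matrix (Fin n) (Fin n) ℝ) (k l : ℕ) :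
    Matrix (Fin n) (Fin n) ℝ :=
  if l ≤ k then prodAux A l (k - l) else (prodAux A k (l - k))⁻¹

/-- Reachability Gramian `G_r(k₁,k₀) = Σ_{k=k₀}^{k₁−1} Φ(k₁,k+1) B_k B_kᵀ Φ(k₁,k+1)ᵀ`. -/
def Gr {n m : ℕ} (A : ℕ → Matrix (Fin n) (Fin n) ℝ) (B : ℕ → Matrix (Fin n) (Fin m) ℝ)
    (k₁ k₀ : ℕ) : Matrix (Fin n) (Fin n) ℝ :=
  ∑ k ∈ Finset.Ico k₀ k₁, Phi A k₁ (k+1) * B k * (B k)ᵀ * (Phi A k₁ (k+1))ᵀ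

/-- Controllability Gramian `G_c(k₁,k₀) = Σ_{k=k₀}^{k₁−1} Φ(k₀,k+1) B_k B_kᵀ Φ(k₀,k+1)ᵀ`. -/
def Gc {n m : ℕ} (A : ℕ → Matrix (Fin n) (Fin n) ℝ) (B : ℕ → Matrix (Fin n) (Fin m) ℝ)
    (k₁ k₀ : ℕ) : Matrix (Fin n) (Fin n) ℝ :=
  ∑ k ∈ Finset.Ico k₀ k₁, Phi A k₀ (k+1) * B k * (B k)ᵀ * (Phi A k₀ (k+1))ᵀ

/-!
Transporting the recursion back to time `0` by `Φ(0,k)` turns it into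
`Φ(0,k) Q_k Φ(0,k)ᵀ = Q_0 - G_c(k,0)`. Write `M = S₀ + ½I + T` with `S₀ = U²`. In the block matrix
`[[I, U], [U, M]]` one Schur complement is `M - U² = ½I + T ≻ 0`, so the other, `I - U M⁻¹ U`, is
`⪰ 0`; conjugating by `R` gives `Q_0 ⪯ G_c(N,0)`, hence `Φ(0,N) Q_N Φ(0,N)ᵀ ⪯ 0`.
On the other hand, if all `I + B_sᵀ Q_{s+1}⁻¹ B_s` were positive definite, positive definiteness
would propagate from `Q_0` to `Q_N`: the inverse of `I + Bᵀ Q_{k+1}⁻¹ B` is `I - Bᵀ P⁻¹ B` with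
`P = A Q_k Aᵀ`, which is the Schur complement of `P` in `[[P, B], [Bᵀ, I]]`, whose other Schur
complement is `P - BBᵀ = Q_{k+1}`.
-/

section SchurComplement

open scoped ComplexOrder

variable {𝕜 : Type*} [RCLike 𝕜] {m n : Type*} [Fintype m] [Fintype n] [DecidableEq m]
  [DecidableEq n]

theorem Matrix.posSemidef_sub_mul_inv_mul_conjTranspose_of_posSemidef_sub {A : Matrix m m 𝕜}
    {D : Matrix n n 𝕜} (C : Matrix m n 𝕜) (hA : A.PosDef) (hD : D.PosDef)
    (h : (D - Cᴴ * A⁻¹ * C).PosSemidef) : (A - C * D⁻¹ * Cᴴ).PosSemidef := by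
  have := A.invertibleOfIsUnitDet hA.det_pos.ne'.isUnit
  have := D.invertibleOfIsUnitDet hD.det_pos.ne'.isUnit
  exact (PosDef.fromBlocks₂₂ A C hD).mp ((PosDef.fromBlocks₁₁ C D hA).mpr h)

theorem Matrix.posSemidef_one_sub_mul_inv_mul_conjTranspose (U : Matrix m n 𝕜)
    {T : Matrix n n 𝕜} (hT : T.PosDef) : (1 - U * (Uᴴ * U + T)⁻¹ * Uᴴ).PosSemidef :=
  posSemidef_sub_mul_inv_mul_conjTranspose_of_posSemidef_sub U PosDef.one
    (PosDef.posSemidef_add (posSemidef_conjTranspose_mul_self U) hT) (by simpa using hT.posSemidef)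

theorem Matrix.inv_one_add_mul_inv_mul_eq_one_sub {K : Type*} [Field K] {P Q : Matrix n n K}
    {C : Matrix n m K} {D : Matrix m n K} (hQ : IsUnit Q) (hP : IsUnit P)
    (h : Q + C * D = P) : (1 + D * Q⁻¹ * C)⁻¹ = 1 - D * P⁻¹ * C := by
  have hQQ : Q * Q⁻¹ = 1 := mul_nonsing_inv Q ((isUnit_iff_isUnit_det Q).mp hQ)
  have hPP : P⁻¹ * P = 1 := nonsing_inv_mul P ((isUnit_iff_isUnit_det P).mp hP)
  have key : P⁻¹ + P⁻¹ * C * D * Q⁻¹ = Q⁻¹ := by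
    calc P⁻¹ + P⁻¹ * C * D * Q⁻¹ = P⁻¹ * (Q + C * D) * Q⁻¹ := by
          rw [Matrix.mul_add, Matrix.add_mul, Matrix.mul_assoc _ Q, hQQ, Matrix.mul_one,
            Matrix.mul_assoc P⁻¹ C]
      _ = Q⁻¹ := by rw [h, hPP, Matrix.one_mul]
  refine inv_eq_left_inv ?_
  calc (1 - D * P⁻¹ * C) * (1 + D * Q⁻¹ * C)
      = 1 + D * (Q⁻¹ - (P⁻¹ + P⁻¹ * C * D * Q⁻¹)) * C := by
        simp only [Matrix.mul_add, Matrix.add_mul, Matrix.mul_sub, Matrix.sub_mul, Matrix.mul_one,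
          Matrix.one_mul, Matrix.mul_assoc]
        abel
    _ = 1 := by rw [key, sub_self, Matrix.mul_zero, Matrix.zero_mul, add_zero]

theorem Matrix.PosDef.sub_mul_conjTranspose {P : Matrix n n 𝕜} {B : Matrix n m 𝕜}
    (hP : P.PosDef) (hQ : IsUnit (P - B * Bᴴ)) (h : (1 + Bᴴ * (P - B * Bᴴ)⁻¹ * B).PosDef) :
    (P - B * Bᴴ).PosDef := by
  have hinv : (1 + Bᴴ * (P - B * Bᴴ)⁻¹ * B)⁻¹ = 1 - Bᴴ * P⁻¹ * B :=
    inv_one_add_mul_inv_mul_eq_one_sub hQ hP.isUnit (sub_add_cancel P _)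
  have hschur : (1 - Bᴴ * P⁻¹ * B).PosSemidef := hinv ▸ h.inv.posSemidef
  refine (PosSemidef.posDef_iff_isUnit ?_).mpr hQ
  simpa using posSemidef_sub_mul_inv_mul_conjTranspose_of_posSemidef_sub B hP PosDef.one hschur

end SchurComplement

theorem posDef_of_posDef_one_add {ι κ : Type*} [Fintype ι] [DecidableEq ι] [Fintype κ]
    [DecidableEq κ] {N : ℕ} {A : ℕ → Matrix ι ι ℝ} {B : ℕ → Matrix ι κ ℝ} {Q : ℕ → Matrix ι ι ℝ}
    (hA : ∀ k < N, IsUnit (A k).det)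
    (hQrec : ∀ k < N, Q (k + 1) = A k * Q k * (A k)ᵀ - B k * (B k)ᵀ)
    (hQinv : ∀ k ≤ N, IsUnit (Q k).det) (hQ0 : (Q 0).PosDef)
    (hB : ∀ k < N, ((1 : Matrix κ κ ℝ) + (B k)ᵀ * (Q (k + 1))⁻¹ * B k).PosDef) :
    ∀ k ≤ N, (Q k).PosDef := by
  intro k hk
  induction k with
  | zero => exact hQ0
  | succ k ih =>
    have hAQA : (A k * Q k * (A k)ᴴ).PosDef :=
      ((isUnit_iff_isUnit_det _).mpr (hA k hk)).posDef_star_right_conjugate_iff.mpr (ih (by omega))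
    have hQk := (isUnit_iff_isUnit_det _).mpr (hQinv _ hk)
    have hstep := hB k hk
    rw [hQrec k hk] at hQk hstep ⊢
    simp only [← conjTranspose_eq_transpose_of_trivial] at hQk hstep ⊢
    exact hAQA.sub_mul_conjTranspose hQk hstep

section StateTransition

variable {n m : ℕ} {A : ℕ → Matrix (Fin n) (Fin n) ℝ} {B : ℕ → Matrix (Fin n) (Fin m) ℝ}
  {k l N : ℕ}

theorem Phi_eq_inv_prodAux (h : l ≤ k) : Phi A l k = (prodAux A l (k - l))⁻¹ := by
  unfold Phi
  split_ifs with hkl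
  · obtain rfl : k = l := le_antisymm hkl h
    simp [prodAux]
  · rfl

theorem Phi_succ_right (h : l ≤ k) : Phi A l (k + 1) = Phi A l k * (A k)⁻¹ := by
  rw [Phi_eq_inv_prodAux h, Phi_eq_inv_prodAux (Nat.le_succ_of_le h), Nat.succ_sub h, prodAux,
    Nat.add_sub_cancel' h, Matrix.mul_inv_rev]

theorem isUnit_Phi (hA : ∀ k < N, IsUnit (A k).det) (h : l ≤ k) (hk : k ≤ N) :
    IsUnit (Phi A l k) := by
  induction k, h using Nat.le_induction with
  | base => simp [Phi, prodAux]
  | succ k hlk ih =>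
    rw [Phi_succ_right hlk]
    exact (ih (by omega)).mul <| isUnit_nonsing_inv_iff.mpr <|
      (isUnit_iff_isUnit_det _).mpr (hA k (by omega))

theorem Gc_succ (h : l ≤ k) :
    Gc A B (k + 1) l = Gc A B k l + Phi A l (k + 1) * B k * (B k)ᵀ * (Phi A l (k + 1))ᵀ :=
  Finset.sum_Ico_succ_top h _

theorem Phi_mul_mul_transpose_eq_sub_Gc {Q : ℕ → Matrix (Fin n) (Fin n) ℝ}
    (hA : ∀ k < N, IsUnit (A k).det)
    (hQrec : ∀ k < N, Q (k + 1) = A k * Q k * (A k)ᵀ - B k * (B k)ᵀ) (h : l ≤ k) (hk : k ≤ N) :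
    Phi A l k * Q k * (Phi A l k)ᵀ = Q l - Gc A B k l := by
  induction k, h using Nat.le_induction with
  | base => simp [Phi, prodAux, Gc]
  | succ k hlk ih =>
    have hAA : (A k)⁻¹ * A k = 1 := nonsing_inv_mul _ (hA k (by omega))
    have hAAt : (A k)ᵀ * ((A k)⁻¹)ᵀ = 1 := by rw [← transpose_mul, hAA, transpose_one]
    rw [Gc_succ hlk, ← sub_sub, ← ih (by omega), hQrec k (by omega), Phi_succ_right hlk]
    calc Phi A l k * (A k)⁻¹ * (A k * Q k * (A k)ᵀ - B k * (B k)ᵀ) * (Phi A l k * (A k)⁻¹)ᵀ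
        = Phi A l k * ((A k)⁻¹ * A k) * Q k * ((A k)ᵀ * ((A k)⁻¹)ᵀ) * (Phi A l k)ᵀ
          - Phi A l k * (A k)⁻¹ * B k * (B k)ᵀ * (Phi A l k * (A k)⁻¹)ᵀ := by
          simp only [transpose_mul, Matrix.mul_sub, Matrix.sub_mul, Matrix.mul_assoc]
      _ = _ := by rw [hAA, hAAt, Matrix.mul_one, Matrix.mul_one]

end StateTransition

theorem stmt8_general
    {n m N : ℕ} (hn : 0 < n)
    (A : ℕ → Matrix (Fin n) (Fin n) ℝ) (B : ℕ → Matrix (Fin n) (Fin m) ℝ)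
    (hA : ∀ k < N, IsUnit (A k).det)
    -- `R` is the positive definite square root of the controllability Gramian `G_c(N,0)`.
    (R : Matrix (Fin n) (Fin n) ℝ) (hR : R.PosDef) (hRR : R * R = Gc A B N 0)
    (S0 : Matrix (Fin n) (Fin n) ℝ)
    -- `U` is the positive semidefinite square root of `S₀`.
    (U : Matrix (Fin n) (Fin n) ℝ) (hU : U.PosSemidef) (hUU : U * U = S0)
    -- `T` is the positive semidefinite square root of `S₀^{1/2} S_N S₀^{1/2} + (1/4) I`.
    (T : Matrix (Fin n) (Fin n) ℝ) (hT : T.PosSemidef)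
    (Q : ℕ → Matrix (Fin n) (Fin n) ℝ)
    (hQ0 : Q 0 = R * U * (S0 + (1/2 : ℝ) • 1 + T)⁻¹ * U * R)
    (hQrec : ∀ k < N, Q (k+1) = A k * Q k * (A k)ᵀ - B k * (B k)ᵀ)
    (hQinv : ∀ k ≤ N, IsUnit (Q k).det) :
    ∃ s < N,
      ¬ ((1 : Matrix (Fin m) (Fin m) ℝ) + (B s)ᵀ * (Q (s+1))⁻¹ * B s).PosDef := by
  by_contra! hcon
  have hUh : Uᴴ = U := hU.1
  have hRh : Rᴴ = R := hR.1
  have hhalfT : ((1/2 : ℝ) • 1 + T).PosDef := (PosDef.one.smul (by norm_num)).add_posSemidef hT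
  set M := Uᴴ * U + ((1/2 : ℝ) • 1 + T)
  have hM : M.PosDef := PosDef.posSemidef_add (posSemidef_conjTranspose_mul_self U) hhalfT
  have hMeq : S0 + (1/2 : ℝ) • 1 + T = M := by simp only [M, hUh, hUU, add_assoc]
  rw [hMeq] at hQ0
  have hQ0pd : (Q 0).PosDef := by
    have hconj : Q 0 = R * U * M⁻¹ * (R * U)ᴴ := by
      simp only [hQ0, conjTranspose_mul, hUh, hRh, Matrix.mul_assoc]
    refine (PosSemidef.posDef_iff_isUnit ?_).mpr ((isUnit_iff_isUnit_det _).mpr (hQinv 0 N.zero_le))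
    exact hconj ▸ hM.inv.posSemidef.mul_mul_conjTranspose_same (R * U)
  have hgap : (Gc A B N 0 - Q 0).PosSemidef := by
    have hconj : Gc A B N 0 - Q 0 = R * (1 - U * M⁻¹ * Uᴴ) * Rᴴ := by
      rw [← hRR, hQ0, hRh, hUh]; noncomm_ring
    exact hconj ▸
      (posSemidef_one_sub_mul_inv_mul_conjTranspose U hhalfT).mul_mul_conjTranspose_same R
  have hQN := posDef_of_posDef_one_add hA hQrec hQinv hQ0pd hcon N le_rfl
  have hpos : (Q 0 - Gc A B N 0).PosDef := by
    have := (isUnit_Phi hA N.zero_le le_rfl).posDef_star_right_conjugate_iff.mpr hQN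
    rwa [star_eq_conjTranspose, conjTranspose_eq_transpose_of_trivial,
      Phi_mul_mul_transpose_eq_sub_Gc hA hQrec N.zero_le le_rfl] at this
  have : Nonempty (Fin n) := Fin.pos_iff_nonempty.mp hn
  have htr := hpos.trace_pos
  rw [← neg_sub, trace_neg] at htr
  linarith [hgap.trace_nonneg]

/-- Degeneracy of the plus-branch solution of the coupled Lyapunov equations. -/
theorem stmt8
    {n m N : ℕ} (hn : 0 < n) (hm : 0 < m) (hN : 0 < N)
    (ε : ℝ) (hε : 0 < ε)
    (A : ℕ → Matrix (Fin n) (Fin n) ℝ) (B : ℕ → Matrix (Fin n) (Fin m) ℝ)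
    (hA : ∀ k < N, IsUnit (A k).det)
    (Sig0 SigN : Matrix (Fin n) (Fin n) ℝ)
    (hSig0 : Sig0.PosDef) (hSigN : SigN.PosDef)
    (kr : ℕ) (hkr1 : 1 ≤ kr) (hkrN : kr ≤ N)
    (hGr1 : ∀ k, kr ≤ k → k ≤ N → IsUnit (Gr A B k 0).det)
    (hGr2 : ∀ k < kr, IsUnit (Gr A B N k).det)
    -- `R` is the positive definite square root of the controllability Gramian `G_c(N,0)`.
    (R : Matrix (Fin n) (Fin n) ℝ) (hR : R.PosDef) (hRR : R * R = Gc A B N 0)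
    (S0 SN : Matrix (Fin n) (Fin n) ℝ)
    (hS0 : S0 = ε⁻¹ • (R⁻¹ * Sig0 * R⁻¹))
    (hSN : SN = ε⁻¹ • (R⁻¹ * Phi A 0 N * SigN * (Phi A 0 N)ᵀ * R⁻¹))
    -- `U` is the positive semidefinite square root of `S₀`.
    (U : Matrix (Fin n) (Fin n) ℝ) (hU : U.PosSemidef) (hUU : U * U = S0)
    -- `T` is the positive semidefinite square root of `S₀^{1/2} S_N S₀^{1/2} + (1/4) I`.
    (T : Matrix (Fin n) (Fin n) ℝ) (hT : T.PosSemidef)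
    (hTT : T * T = U * SN * U + (1/4 : ℝ) • 1)
    -- invertibility of `F(S₀,S_N)` and `B(S₀,S_N)`
    (hF : IsUnit (S0 + (1/2 : ℝ) • 1 - T).det)
    (hB : IsUnit (-S0 + (1/2 : ℝ) • 1 + T).det)
    (Q : ℕ → Matrix (Fin n) (Fin n) ℝ)
    (hQ0 : Q 0 = R * U * (S0 + (1/2 : ℝ) • 1 + T)⁻¹ * U * R)
    (hQrec : ∀ k < N, Q (k+1) = A k * Q k * (A k)ᵀ - B k * (B k)ᵀ)
    (hQinv : ∀ k ≤ N, IsUnit (Q k).det) :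
    ∃ s < N,
      ¬ ((1 : Matrix (Fin m) (Fin m) ℝ) + (B s)ᵀ * (Q (s+1))⁻¹ * B s).PosDef :=
  stmt8_general hn A B hA R hR hRR S0 U hU hUU T hT Q hQ0 hQrec hQinv

end
end

section
/- Inverse-Gramian identity along the pinned-process Lyapunov pair: let P_k be defined by P₀ = 0 and P_{k+1} = A_kP_kA_kᵀ + B_kB_kᵀ, and let Q_k be defined by Q_N = 0 and Q_{k+1} = A_kQ_kA_kᵀ − B_kB_kᵀ for k = 0,…,N−1. If P_N is invertible, then for every k ∈ {0,…,N} the matrix P_k + Q_k is invertible and Φ(N,k)ᵀP_N⁻¹Φ(N,k) = (P_k + Q_k)⁻¹. -/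
open Matrix

noncomputable section

lemma prodAux_succ' {n : ℕ} (A : ℕ → Matrix (Fin n) (Fin n) ℝ) (l d : ℕ) :
    prodAux A l (d + 1) = prodAux A (l + 1) d * A l := by
  induction d with
  | zero => simp [prodAux]
  | succ d ih =>
    have h1 : prodAux A l (d + 2) = A (l + (d + 1)) * prodAux A l (d + 1) := rfl
    have h2 : prodAux A (l + 1) (d + 1) = A (l + 1 + d) * prodAux A (l + 1) d := rfl
    rw [h1, ih, h2, Matrix.mul_assoc, show l + 1 + d = l + (d + 1) by omega]

lemma det_prodAux {n : ℕ} (A : ℕ → Matrix (Fin n) (Fin n) ℝ) (l d : ℕ)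
    (h : ∀ j, l ≤ j → j < l + d → IsUnit (A j).det) :
    IsUnit (prodAux A l d).det := by
  induction d with
  | zero => simp [prodAux]
  | succ d ih =>
    have h1 : prodAux A l (d + 1) = A (l + d) * prodAux A l d := rfl
    rw [h1, Matrix.det_mul]
    exact (h (l + d) (by omega) (by omega)).mul (ih fun j hj hj' => h j hj (by omega))

/-- Inverse-Gramian identity along the pinned-process Lyapunov pair. -/
theorem stmt9 {n m N : ℕ} (hn : 0 < n) (hm : 0 < m) (hN : 0 < N)
    (A : ℕ → Matrix (Fin n) (Fin n) ℝ) (B : ℕ → Matrix (Fin n) (Fin m) ℝ)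
    (hA : ∀ k < N, IsUnit (A k).det)
    (P Q : ℕ → Matrix (Fin n) (Fin n) ℝ)
    (hP0 : P 0 = 0)
    (hPrec : ∀ k < N, P (k+1) = A k * P k * (A k)ᵀ + B k * (B k)ᵀ)
    (hQN : Q N = 0)
    (hQrec : ∀ k < N, Q (k+1) = A k * Q k * (A k)ᵀ - B k * (B k)ᵀ)
    (hPN : IsUnit (P N).det) :
    ∀ k ≤ N, IsUnit (P k + Q k).det ∧
      (Phi A N k)ᵀ * (P N)⁻¹ * Phi A N k = (P k + Q k)⁻¹ := by
  have hPhi : ∀ k ≤ N, Phi A N k = prodAux A k (N - k) := by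
    intro k hk; rw [Phi, if_pos hk]
  have hPhiStep : ∀ k < N, Phi A N k = Phi A N (k + 1) * A k := by
    intro k hk
    rw [hPhi k (le_of_lt hk), hPhi (k + 1) hk,
      show N - k = (N - (k + 1)) + 1 by omega, prodAux_succ']
  have hSStep : ∀ k < N, P (k + 1) + Q (k + 1) = A k * (P k + Q k) * (A k)ᵀ := by
    intro k hk
    rw [hPrec k hk, hQrec k hk]
    noncomm_ring
  -- key identity, by downward induction
  have keyAux : ∀ d ≤ N,
      Phi A N (N - d) * (P (N - d) + Q (N - d)) * (Phi A N (N - d))ᵀ = P N := by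
    intro d
    induction d with
    | zero =>
      intro _
      have h1 : Phi A N N = 1 := by
        rw [hPhi N (le_refl N), Nat.sub_self]; rfl
      simp only [Nat.sub_zero, h1, hQN, Matrix.transpose_one, Matrix.mul_one,
        Matrix.one_mul, add_zero]
    | succ d ih =>
      intro hd
      have hk : N - (d + 1) < N := by omega
      have hk1 : N - (d + 1) + 1 = N - d := by omega
      have h1 := hPhiStep (N - (d + 1)) hk
      have h2 := hSStep (N - (d + 1)) hk
      rw [hk1] at h1 h2
      have ih' := ih (by omega)
      rw [h2] at ih'
      rw [h1, Matrix.transpose_mul]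
      simpa only [Matrix.mul_assoc] using ih'
  have key : ∀ k ≤ N,
      Phi A N k * (P k + Q k) * (Phi A N k)ᵀ = P N := by
    intro k hk
    have := keyAux (N - k) (by omega)
    rwa [show N - (N - k) = k by omega] at this
  intro k hk
  have hdPhi : IsUnit (Phi A N k).det := by
    rw [hPhi k hk]
    exact det_prodAux A k (N - k) fun j hj hj' => hA j (by omega)
  have hdPhiT : IsUnit ((Phi A N k)ᵀ).det := by rwa [Matrix.det_transpose]
  have hkey := key k hk
  have hdS : IsUnit (P k + Q k).det := by
    have := congrArg Matrix.det hkey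
    rw [Matrix.det_mul, Matrix.det_mul, Matrix.det_transpose] at this
    have hu : IsUnit ((Phi A N k).det * (P k + Q k).det * (Phi A N k).det) := by
      rw [this]; exact hPN
    rw [IsUnit.mul_iff, IsUnit.mul_iff] at hu
    exact hu.1.2
  refine ⟨hdS, ?_⟩
  have hS : P k + Q k = (Phi A N k)⁻¹ * P N * ((Phi A N k)ᵀ)⁻¹ := by
    rw [← hkey]
    simp only [Matrix.mul_assoc]
    rw [Matrix.mul_nonsing_inv _ hdPhiT, Matrix.mul_one,
      Matrix.nonsing_inv_mul_cancel_left _ _ hdPhi]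
  have hone : (P k + Q k) * ((Phi A N k)ᵀ * (P N)⁻¹ * Phi A N k) = 1 := by
    rw [hS]
    rw [show (Phi A N k)⁻¹ * P N * ((Phi A N k)ᵀ)⁻¹ * ((Phi A N k)ᵀ * (P N)⁻¹ * Phi A N k)
        = (Phi A N k)⁻¹ * (P N * (((Phi A N k)ᵀ)⁻¹ * (Phi A N k)ᵀ) * (P N)⁻¹) * Phi A N k by
      simp only [Matrix.mul_assoc]]
    rw [Matrix.nonsing_inv_mul _ hdPhiT, Matrix.mul_one,
      Matrix.mul_nonsing_inv _ hPN, Matrix.mul_one,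
      Matrix.nonsing_inv_mul _ hdPhi]
  exact (Matrix.inv_eq_right_inv hone).symm

end
end

section
/- Recursion for the conditional (pinned) cross-covariance: with P_k defined by P₀ = 0 and P_{k+1} = A_kP_kA_kᵀ + B_kB_kᵀ, P_N invertible, P̃(k,s) := P_kΦ(s,k)ᵀ − P_kΦ(N,k)ᵀP_N⁻¹Φ(N,s)P_s, and Â_s := (I − B_sB_sᵀΦ(N,s+1)ᵀG_r(N,s)†Φ(N,s+1))A_s, where G_r(N,s)† is the Moore–Penrose inverse of G_r(N,s), it holds for all 0 ≤ k ≤ s ≤ N−1 that P̃(k,s+1) = P̃(k,s)Â_sᵀ. -/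
open Matrix

noncomputable section

/-- `H` is the Moore–Penrose inverse of `G`. -/
def IsMoorePenrose {n : ℕ} (G H : Matrix (Fin n) (Fin n) ℝ) : Prop :=
  G * H * G = G ∧ H * G * H = H ∧ (G * H)ᵀ = G * H ∧ (H * G)ᵀ = H * G


lemma prodAux_add {n : ℕ} (A : ℕ → Matrix (Fin n) (Fin n) ℝ) (l d₁ d₂ : ℕ) :
    prodAux A l (d₁ + d₂) = prodAux A (l + d₂) d₁ * prodAux A l d₂ := by
  induction d₁ with
  | zero => simp [prodAux]
  | succ d ih =>
      have : d + 1 + d₂ = (d + d₂) + 1 := by omega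
      rw [this]
      show A (l + (d + d₂)) * prodAux A l (d + d₂) = _
      rw [ih]
      show _ = A (l + d₂ + d) * prodAux A (l + d₂) d * prodAux A l d₂
      rw [show l + (d + d₂) = l + d₂ + d by omega, Matrix.mul_assoc]

lemma Phi_le {n : ℕ} (A : ℕ → Matrix (Fin n) (Fin n) ℝ) {k l : ℕ} (h : l ≤ k) :
    Phi A k l = prodAux A l (k - l) := if_pos h

lemma Phi_self {n : ℕ} (A : ℕ → Matrix (Fin n) (Fin n) ℝ) (k : ℕ) :
    Phi A k k = 1 := by
  rw [Phi_le A le_rfl, Nat.sub_self]; rfl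

lemma Phi_succ {n : ℕ} (A : ℕ → Matrix (Fin n) (Fin n) ℝ) {k l : ℕ} (h : l ≤ k) :
    Phi A (k+1) l = A k * Phi A k l := by
  rw [Phi_le A (h.trans (Nat.le_succ k)), Phi_le A h,
    show k + 1 - l = (k - l) + 1 by omega]
  show A (l + (k - l)) * prodAux A l (k - l) = _
  rw [Nat.add_sub_cancel' h]

lemma Phi_split {n : ℕ} (A : ℕ → Matrix (Fin n) (Fin n) ℝ) {k j l : ℕ}
    (h1 : l ≤ j) (h2 : j ≤ k) :
    Phi A k l = Phi A k j * Phi A j l := by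
  rw [Phi_le A (h1.trans h2), Phi_le A h2, Phi_le A h1,
    show k - l = (k - j) + (j - l) by omega, prodAux_add,
    Nat.add_sub_cancel' h1]

lemma Gr_self {n m : ℕ} (A : ℕ → Matrix (Fin n) (Fin n) ℝ)
    (B : ℕ → Matrix (Fin n) (Fin m) ℝ) (k : ℕ) : Gr A B k k = 0 := by
  simp [Gr]

lemma Gr_split {n m : ℕ} (A : ℕ → Matrix (Fin n) (Fin n) ℝ)
    (B : ℕ → Matrix (Fin n) (Fin m) ℝ) {N s : ℕ} (h : s < N) :
    Gr A B N s
      = Phi A N (s+1) * B s * (B s)ᵀ * (Phi A N (s+1))ᵀ + Gr A B N (s+1) := by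
  rw [Gr, Finset.sum_eq_sum_Ico_succ_bot h]; rfl

lemma Gr_succ_top {n m : ℕ} (A : ℕ → Matrix (Fin n) (Fin n) ℝ)
    (B : ℕ → Matrix (Fin n) (Fin m) ℝ) {u t : ℕ} (h : t ≤ u) :
    Gr A B (u+1) t = A u * Gr A B u t * (A u)ᵀ + B u * (B u)ᵀ := by
  rw [Gr, Finset.sum_Ico_succ_top h, Phi_self, Gr, Finset.mul_sum, Finset.sum_mul]
  congr 1
  · refine Finset.sum_congr rfl fun k hk => ?_
    have hk' : k + 1 ≤ u := (Finset.mem_Ico.mp hk).2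
    rw [Phi_succ A hk']
    simp only [Matrix.transpose_mul, Matrix.mul_assoc]
  · simp [Matrix.mul_assoc]

lemma Gr_transpose {n m : ℕ} (A : ℕ → Matrix (Fin n) (Fin n) ℝ)
    (B : ℕ → Matrix (Fin n) (Fin m) ℝ) (k₁ k₀ : ℕ) :
    (Gr A B k₁ k₀)ᵀ = Gr A B k₁ k₀ := by
  rw [Gr, Matrix.transpose_sum]
  refine Finset.sum_congr rfl fun k _ => ?_
  simp [Matrix.transpose_mul, Matrix.mul_assoc]

lemma P_eq {n m N : ℕ} (A : ℕ → Matrix (Fin n) (Fin n) ℝ)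
    (B : ℕ → Matrix (Fin n) (Fin m) ℝ)
    (P : ℕ → Matrix (Fin n) (Fin n) ℝ)
    (hPrec : ∀ k < N, P (k+1) = A k * P k * (A k)ᵀ + B k * (B k)ᵀ)
    (t : ℕ) : ∀ u, t ≤ u → u ≤ N →
      P u = Phi A u t * P t * (Phi A u t)ᵀ + Gr A B u t := by
  intro u htu
  induction u, htu using Nat.le_induction with
  | base => intro _; simp [Phi_self, Gr_self]
  | succ u htu ih =>
      intro huN
      have hu : u < N := huN
      rw [hPrec u hu, ih hu.le, Phi_succ A htu, Gr_succ_top A B htu,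
        Matrix.transpose_mul]
      noncomm_ring

lemma trace_mul_transpose_self_nonneg {n m : ℕ} (C : Matrix (Fin n) (Fin m) ℝ) :
    0 ≤ Matrix.trace (C * Cᵀ) := by
  rw [Matrix.trace]
  refine Finset.sum_nonneg fun i _ => ?_
  rw [Matrix.diag_apply, Matrix.mul_apply]
  exact Finset.sum_nonneg fun j _ => by
    simp only [Matrix.transpose_apply]; exact mul_self_nonneg _

lemma eq_zero_of_trace_mul_transpose_self {n m : ℕ} (C : Matrix (Fin n) (Fin m) ℝ)
    (h : Matrix.trace (C * Cᵀ) = 0) : C = 0 := by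
  ext i j
  have h' : ∑ i, ∑ j, C i j * C i j = 0 := by
    rw [Matrix.trace] at h
    simpa [Matrix.diag_apply, Matrix.mul_apply, Matrix.transpose_apply] using h
  have h1 := (Finset.sum_eq_zero_iff_of_nonneg
    (fun i _ => Finset.sum_nonneg fun j _ => mul_self_nonneg (C i j))).mp h' i
    (Finset.mem_univ i)
  have h2 := (Finset.sum_eq_zero_iff_of_nonneg
    (fun j _ => mul_self_nonneg (C i j))).mp h1 j (Finset.mem_univ j)
  have := mul_self_eq_zero.mp h2
  simpa using this

/-- `Gd s * Gr * (Φ(N,s+1) B s) = Φ(N,s+1) B s`. -/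
lemma mp_proj {n m N s : ℕ} (A : ℕ → Matrix (Fin n) (Fin n) ℝ)
    (B : ℕ → Matrix (Fin n) (Fin m) ℝ) (H : Matrix (Fin n) (Fin n) ℝ)
    (hs : s < N) (hmp : IsMoorePenrose (Gr A B N s) H) :
    H * Gr A B N s * (Phi A N (s+1) * B s) = Phi A N (s+1) * B s := by
  obtain ⟨h1, h2, h3, h4⟩ := hmp
  set G := Gr A B N s with hG
  set Q : Matrix (Fin n) (Fin n) ℝ := 1 - H * G with hQ
  have hQt : Qᵀ = Q := by rw [hQ, Matrix.transpose_sub, Matrix.transpose_one, h4]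
  have hGQ : G * Q = 0 := by rw [hQ, Matrix.mul_sub, Matrix.mul_one, ← Matrix.mul_assoc, h1, sub_self]
  have hQGQ : Q * G * Q = 0 := by rw [Matrix.mul_assoc, hGQ, Matrix.mul_zero]
  -- expand G as sum
  have hsum : Q * G * Q = ∑ k ∈ Finset.Ico s N,
      (Q * (Phi A N (k+1) * B k)) * (Q * (Phi A N (k+1) * B k))ᵀ := by
    rw [hG, Gr, Finset.mul_sum, Finset.sum_mul]
    refine Finset.sum_congr rfl fun k _ => ?_
    rw [Matrix.transpose_mul, Matrix.transpose_mul, hQt]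
    simp only [Matrix.mul_assoc]
  have htr : ∑ k ∈ Finset.Ico s N,
      Matrix.trace ((Q * (Phi A N (k+1) * B k)) * (Q * (Phi A N (k+1) * B k))ᵀ) = 0 := by
    rw [← Matrix.trace_sum, ← hsum, hQGQ, Matrix.trace_zero]
  have hterm := (Finset.sum_eq_zero_iff_of_nonneg
    (fun k _ => trace_mul_transpose_self_nonneg _)).mp htr s
    (Finset.mem_Ico.mpr ⟨le_rfl, hs⟩)
  have hQM : Q * (Phi A N (s+1) * B s) = 0 :=
    eq_zero_of_trace_mul_transpose_self _ hterm
  have := sub_eq_zero.mpr (rfl : Phi A N (s+1) * B s = Phi A N (s+1) * B s)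
  rw [hQ, Matrix.sub_mul, Matrix.one_mul, sub_eq_zero] at hQM
  rw [Matrix.mul_assoc] at hQM ⊢
  exact hQM.symm

set_option maxHeartbeats 1000000 in
lemma key_ring {R : Type*} [Ring R] (Pk Ps F' As As' Φ1 Φ1' H' W PN PNi G : R)
    (h1 : Φ1 * (As * Ps * As') * Φ1' = PN - G)
    (h2 : PNi * PN = 1)
    (h3 : G * H' * (Φ1 * W) = Φ1 * W) :
    Pk * (F' * As') - Pk * (F' * As' * Φ1') * PNi * Φ1 * (As * Ps * As' + W)
      = (Pk * F' - Pk * (F' * As' * Φ1') * PNi * (Φ1 * As) * Ps)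
        * (As' * (1 - Φ1' * H' * Φ1 * W)) := by
  linear_combination (norm := noncomm_ring)
    - (Pk * (F' * As' * Φ1') * PNi) * h1 * (H' * Φ1 * W)
    - Pk * (F' * As' * Φ1') * h2 * (H' * Φ1 * W)
    + (Pk * (F' * As' * Φ1') * PNi) * h3

/-- Recursion for the conditional (pinned) cross-covariance. -/
theorem stmt11 {n m N : ℕ} (hn : 0 < n) (hm : 0 < m) (hN : 0 < N)
    (A : ℕ → Matrix (Fin n) (Fin n) ℝ) (B : ℕ → Matrix (Fin n) (Fin m) ℝ)
    (hA : ∀ k < N, IsUnit (A k).det)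
    (P : ℕ → Matrix (Fin n) (Fin n) ℝ)
    (hP0 : P 0 = 0)
    (hPrec : ∀ k < N, P (k+1) = A k * P k * (A k)ᵀ + B k * (B k)ᵀ)
    (hPN : IsUnit (P N).det)
    -- `Gd s` is the Moore–Penrose inverse of `G_r(N,s)`
    (Gd : ℕ → Matrix (Fin n) (Fin n) ℝ)
    (hGd : ∀ s < N, IsMoorePenrose (Gr A B N s) (Gd s))
    (Ptil : ℕ → ℕ → Matrix (Fin n) (Fin n) ℝ)
    (hPtil : ∀ k s, Ptil k s =
      P k * (Phi A s k)ᵀ - P k * (Phi A N k)ᵀ * (P N)⁻¹ * Phi A N s * P s)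
    (Ahat : ℕ → Matrix (Fin n) (Fin n) ℝ)
    (hAhat : ∀ s, Ahat s =
      ((1 : Matrix (Fin n) (Fin n) ℝ)
        - B s * (B s)ᵀ * (Phi A N (s+1))ᵀ * Gd s * Phi A N (s+1)) * A s) :
    ∀ k s, k ≤ s → s < N → Ptil k (s+1) = Ptil k s * (Ahat s)ᵀ := by
  intro k s hks hsN
  have hs1N : s + 1 ≤ N := hsN
  have hφ1 : Phi A (s+1) k = A s * Phi A s k := Phi_succ A hks
  have hφ2 : Phi A N k = Phi A N (s+1) * Phi A (s+1) k :=
    Phi_split A (hks.trans (Nat.le_succ s)) hs1N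
  have hφ3 : Phi A N s = Phi A N (s+1) * A s := by
    rw [Phi_split A (Nat.le_succ s) hs1N, Phi_succ A le_rfl, Phi_self, Matrix.mul_one]
  have hp := P_eq A B P hPrec s N (le_of_lt hsN) le_rfl
  rw [hφ3] at hp
  have h1 : Phi A N (s+1) * (A s * P s * (A s)ᵀ) * (Phi A N (s+1))ᵀ
      = P N - Gr A B N s := by
    rw [hp, add_sub_cancel_right, Matrix.transpose_mul]
    noncomm_ring
  have h2 : (P N)⁻¹ * P N = 1 := Matrix.nonsing_inv_mul _ hPN
  have hGt : (Gr A B N s)ᵀ = Gr A B N s := Gr_transpose A B N s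
  have hsym : Gr A B N s * (Gd s)ᵀ = Gd s * Gr A B N s := by
    calc Gr A B N s * (Gd s)ᵀ = (Gd s * (Gr A B N s)ᵀ)ᵀ := by
          rw [Matrix.transpose_mul, Matrix.transpose_transpose]
      _ = (Gd s * Gr A B N s)ᵀ := by rw [hGt]
      _ = Gd s * Gr A B N s := (hGd s hsN).2.2.2
  have hmp := mp_proj A B (Gd s) hsN (hGd s hsN)
  have h3 : Gr A B N s * (Gd s)ᵀ * (Phi A N (s+1) * (B s * (B s)ᵀ))
      = Phi A N (s+1) * (B s * (B s)ᵀ) := by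
    have ha : Gd s * Gr A B N s * (Phi A N (s+1) * (B s * (B s)ᵀ))
        = Gd s * Gr A B N s * (Phi A N (s+1) * B s) * (B s)ᵀ := by
      simp [Matrix.mul_assoc]
    rw [hsym, ha, hmp, Matrix.mul_assoc]
  have K := key_ring (P k) (P s) (Phi A s k)ᵀ (A s) (A s)ᵀ (Phi A N (s+1))
    (Phi A N (s+1))ᵀ (Gd s)ᵀ (B s * (B s)ᵀ) (P N) (P N)⁻¹ (Gr A B N s) h1 h2 h3
  rw [hPtil k (s+1), hPtil k s, hAhat s, hPrec s hsN, hφ2, hφ3, hφ1]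
  simpa only [Matrix.transpose_mul, Matrix.transpose_sub, Matrix.transpose_one,
    Matrix.transpose_transpose, Matrix.mul_assoc, Matrix.mul_add, Matrix.add_mul,
    Matrix.mul_sub, Matrix.sub_mul, Matrix.mul_one, Matrix.one_mul] using K


end
end

section
/- Pseudoinverse transfer identity for the reachability Gramian: for every k ∈ {0,…,N−1}, Φ(N,k+1)B_kB_kᵀΦ(N,k+1)ᵀG_r(N,k)† = Φ(N,k+1)B_kB_kᵀ(A_k⁻¹)ᵀ(G_r(N,k)Φ(k,N)ᵀ)†, where G_r(N,k)† and (G_r(N,k)Φ(k,N)ᵀ)† denote Moore–Penrose inverses. -/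
open Matrix

noncomputable section

lemma prodAux_succ_right {n : ℕ} (A : ℕ → Matrix (Fin n) (Fin n) ℝ) (l : ℕ) :
    ∀ d : ℕ, prodAux A l (d + 1) = prodAux A (l + 1) d * A l := by
  intro d
  induction d with
  | zero => simp [prodAux]
  | succ d ih =>
      have h : l + (d + 1) = l + 1 + d := by omega
      show A (l + (d + 1)) * prodAux A l (d + 1) = A (l + 1 + d) * prodAux A (l + 1) d * A l
      rw [ih, h, Matrix.mul_assoc]

lemma prodAux_det_isUnit {n : ℕ} (A : ℕ → Matrix (Fin n) (Fin n) ℝ) (l : ℕ) :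
    ∀ d : ℕ, (∀ j, l ≤ j → j < l + d → IsUnit (A j).det) →
      IsUnit (prodAux A l d).det := by
  intro d
  induction d with
  | zero => intro _; simp [prodAux]
  | succ d ih =>
      intro h
      show IsUnit (A (l + d) * prodAux A l d).det
      rw [Matrix.det_mul]
      exact (h (l + d) (by omega) (by omega)).mul (ih (fun j hj hj' => h j hj (by omega)))

lemma sum_mul_transpose_self_eq_zero {n m : ℕ} {ι : Type*} (s : Finset ι)
    (T : ι → Matrix (Fin n) (Fin m) ℝ)
    (h : ∑ j ∈ s, T j * (T j)ᵀ = 0) : ∀ j ∈ s, T j = 0 := by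
  have htr : ∀ (M : Matrix (Fin n) (Fin m) ℝ),
      Matrix.trace (M * Mᵀ) = ∑ i, ∑ j, (M i j)^2 := by
    intro M
    simp [Matrix.trace, Matrix.diag, Matrix.mul_apply, Matrix.transpose_apply, sq]
  have hnn : ∀ (M : Matrix (Fin n) (Fin m) ℝ), 0 ≤ Matrix.trace (M * Mᵀ) := by
    intro M
    rw [htr M]
    positivity
  have h0 : ∑ j ∈ s, Matrix.trace (T j * (T j)ᵀ) = 0 := by
    rw [← Matrix.trace_sum, h, Matrix.trace_zero]
  have heach := (Finset.sum_eq_zero_iff_of_nonneg (fun j _ => hnn (T j))).mp h0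
  intro j hj
  have h1 : ∑ i, ∑ l, (T j i l)^2 = 0 := by rw [← htr]; exact heach j hj
  ext i l
  have h2 := (Finset.sum_eq_zero_iff_of_nonneg
    (fun i _ => Finset.sum_nonneg (fun l _ => sq_nonneg (T j i l)))).mp h1 i (Finset.mem_univ i)
  have h3 := (Finset.sum_eq_zero_iff_of_nonneg
    (fun l _ => sq_nonneg (T j i l))).mp h2 l (Finset.mem_univ l)
  simpa using pow_eq_zero_iff (n := 2) (by norm_num) |>.mp h3

/-- Pseudoinverse transfer identity for the reachability Gramian. -/
theorem stmt15 {n m N : ℕ} (hn : 0 < n) (hm : 0 < m) (hN : 0 < N)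
    (A : ℕ → Matrix (Fin n) (Fin n) ℝ) (B : ℕ → Matrix (Fin n) (Fin m) ℝ)
    (hA : ∀ k < N, IsUnit (A k).det)
    -- `Gd k` is the Moore–Penrose inverse of `G_r(N,k)`
    (Gd : ℕ → Matrix (Fin n) (Fin n) ℝ)
    (hGd : ∀ k < N, IsMoorePenrose (Gr A B N k) (Gd k))
    -- `Hd k` is the Moore–Penrose inverse of `G_r(N,k) Φ(k,N)ᵀ`
    (Hd : ℕ → Matrix (Fin n) (Fin n) ℝ)
    (hHd : ∀ k < N, IsMoorePenrose (Gr A B N k * (Phi A k N)ᵀ) (Hd k)) :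
    ∀ k < N,
      Phi A N (k+1) * B k * (B k)ᵀ * (Phi A N (k+1))ᵀ * Gd k
        = Phi A N (k+1) * B k * (B k)ᵀ * ((A k)⁻¹)ᵀ * Hd k := by
  intro k hk
  obtain ⟨h1, h2, h3, h4⟩ := hGd k hk
  obtain ⟨j1, j2, j3, j4⟩ := hHd k hk
  set G : Matrix (Fin n) (Fin n) ℝ := Gr A B N k with hGdef
  set T : ℕ → Matrix (Fin n) (Fin m) ℝ := fun j => Phi A N (j+1) * B j with hTdef
  have hGsum : G = ∑ j ∈ Finset.Ico k N, T j * (T j)ᵀ := by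
    rw [hGdef]
    simp only [Gr, hTdef, Matrix.transpose_mul, Matrix.mul_assoc]
  have hGsym : Gᵀ = G := by
    rw [hGsum, Matrix.transpose_sum]
    refine Finset.sum_congr rfl (fun j _ => ?_)
    rw [Matrix.transpose_mul, Matrix.transpose_transpose]
  set E : Matrix (Fin n) (Fin n) ℝ := G * Gd k with hEdef
  have hEsym : Eᵀ = E := h3
  have hEG : E * G = G := h1
  have hGE : G * E = G := by
    have h' : (G * E)ᵀ = G := by rw [Matrix.transpose_mul, hEsym, hGsym, hEG]
    calc G * E = ((G * E)ᵀ)ᵀ := by rw [Matrix.transpose_transpose]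
      _ = Gᵀ := by rw [h']
      _ = G := hGsym
  -- column space argument: E fixes each T j
  have hsum0 : ∑ j ∈ Finset.Ico k N, ((1 - E) * T j) * ((1 - E) * T j)ᵀ = 0 := by
    have hterm : ∀ j, ((1 - E) * T j) * ((1 - E) * T j)ᵀ
        = (1 - E) * (T j * (T j)ᵀ) * (1 - E)ᵀ := by
      intro j
      rw [Matrix.transpose_mul]
      simp only [Matrix.mul_assoc]
    rw [Finset.sum_congr rfl (fun j _ => hterm j), ← Finset.sum_mul, ← Finset.mul_sum,
      ← hGsum]
    have hz : (1 - E) * G = 0 := by rw [sub_mul, one_mul, hEG, sub_self]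
    rw [hz, Matrix.zero_mul]
  have hTk0 := sum_mul_transpose_self_eq_zero _ _ hsum0 k (Finset.mem_Ico.mpr ⟨le_refl k, hk⟩)
  have hETk : E * T k = T k := by
    have h' := hTk0
    rw [Matrix.sub_mul, Matrix.one_mul, sub_eq_zero] at h'
    exact h'.symm
  set M : Matrix (Fin n) (Fin n) ℝ := T k * (T k)ᵀ with hMdef
  have hMsym : Mᵀ = M := by rw [hMdef, Matrix.transpose_mul, Matrix.transpose_transpose]
  have hEM : E * M = M := by rw [hMdef, ← Matrix.mul_assoc, hETk]
  set X : Matrix (Fin n) (Fin n) ℝ := (Gd k * M)ᵀ with hXdef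
  have hXG : X * G = M := by
    have h' : G * (Gd k * M) = M := by rw [← Matrix.mul_assoc]; exact hEM
    calc X * G = (Gd k * M)ᵀ * Gᵀ := by rw [hGsym]
      _ = (G * (Gd k * M))ᵀ := (Matrix.transpose_mul _ _).symm
      _ = Mᵀ := by rw [h']
      _ = M := hMsym
  -- the invertible transition matrices
  set Q : Matrix (Fin n) (Fin n) ℝ := prodAux A k (N - k) with hQdef
  have hPhikN : Phi A k N = Q⁻¹ := by rw [Phi, if_neg (by omega)]
  have hQdet : IsUnit Q.det := by
    rw [hQdef]
    exact prodAux_det_isUnit A k (N - k) (fun j hj hj' => hA j (by omega))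
  rw [hPhikN] at j1 j2 j3 j4
  set Hm : Matrix (Fin n) (Fin n) ℝ := G * (Q⁻¹)ᵀ with hHmdef
  have hHQ : Hm * Qᵀ = G := by
    rw [hHmdef, Matrix.mul_assoc, ← Matrix.transpose_mul, Matrix.mul_nonsing_inv Q hQdet,
      Matrix.transpose_one, Matrix.mul_one]
  set E2 : Matrix (Fin n) (Fin n) ℝ := Hm * Hd k with hE2def
  have hE2sym : E2ᵀ = E2 := j3
  have hE2G : E2 * G = G := by
    rw [← hHQ, ← Matrix.mul_assoc, j1]
  have hEHm : E * Hm = Hm := by rw [hHmdef, ← Matrix.mul_assoc, hEG]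
  have hE2E : E2 * E = E := by rw [hEdef, ← Matrix.mul_assoc, hE2G]
  have hEE2 : E * E2 = E2 := by rw [hE2def, ← Matrix.mul_assoc, hEHm]
  have hEeqE2 : E = E2 := by
    calc E = Eᵀ := hEsym.symm
      _ = (E2 * E)ᵀ := by rw [hE2E]
      _ = Eᵀ * E2ᵀ := Matrix.transpose_mul _ _
      _ = E * E2 := by rw [hEsym, hE2sym]
      _ = E2 := hEE2
  -- main identity at the level of M
  have key : M * Gd k = M * (Q⁻¹)ᵀ * Hd k := by
    calc M * Gd k = X * G * Gd k := by rw [hXG]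
      _ = X * E := by rw [Matrix.mul_assoc, ← hEdef]
      _ = X * E2 := by rw [hEeqE2]
      _ = X * (G * ((Q⁻¹)ᵀ * Hd k)) := by rw [hE2def, hHmdef, Matrix.mul_assoc]
      _ = X * G * (Q⁻¹)ᵀ * Hd k := by simp only [Matrix.mul_assoc]
      _ = M * (Q⁻¹)ᵀ * Hd k := by rw [hXG]
  -- relate Q⁻¹ and (A k)⁻¹
  have hPval : Phi A N (k+1) = prodAux A (k+1) (N - (k+1)) := by
    rw [Phi, if_pos (by omega)]
  have hPdet : IsUnit (Phi A N (k+1)).det := by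
    rw [hPval]
    exact prodAux_det_isUnit A (k+1) _ (fun j hj hj' => hA j (by omega))
  have hQPA : Q = Phi A N (k+1) * A k := by
    rw [hQdef, hPval]
    have hNk : N - k = (N - (k+1)) + 1 := by omega
    rw [hNk, prodAux_succ_right]
  have hQinvP : Q⁻¹ * Phi A N (k+1) = (A k)⁻¹ := by
    rw [hQPA, Matrix.mul_inv_rev, Matrix.mul_assoc,
      Matrix.nonsing_inv_mul _ hPdet, Matrix.mul_one]
  have hPtQ : (Phi A N (k+1))ᵀ * (Q⁻¹)ᵀ = ((A k)⁻¹)ᵀ := by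
    rw [← Matrix.transpose_mul, hQinvP]
  -- finish
  have hMg : Phi A N (k+1) * B k * (B k)ᵀ * (Phi A N (k+1))ᵀ * Gd k = M * Gd k := by
    rw [hMdef, hTdef]
    simp only [Matrix.transpose_mul, Matrix.mul_assoc]
  have hMh : M * (Q⁻¹)ᵀ * Hd k = Phi A N (k+1) * B k * (B k)ᵀ * ((A k)⁻¹)ᵀ * Hd k := by
    rw [hMdef, hTdef, ← hPtQ]
    simp only [Matrix.transpose_mul, Matrix.mul_assoc]
  rw [hMg, key, hMh]


end
end
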